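/- arXiv:math-ph/9912005 — 5 statements merged into one kernel-verified Lean document; each statement's English description precedes it below -/
import Mathlib

section
/- Let M be a 2×2 real matrix with determinant 1 and let Φ₀ ∈ ℝ² with ‖Φ₀‖ = 1. Then max(‖M·Φ₀‖, ‖M²·Φ₀‖) ≥ (1/2)·min(1, 1/|tr M|), where if tr M = 0 the bound is interpreted as 1/2. -/
noncomputable def vnorm (v : Fin 2 → ℝ) : ℝ := Real.sqrt (v 0 ^ 2 + v 1 ^ 2)

lemma vnorm_eq (v : Fin 2 → ℝ) : vnorm v = ‖(WithLp.equiv 2 (Fin 2 → ℝ)).symm v‖ := by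
  rw [EuclideanSpace.norm_eq]
  simp [vnorm, Fin.sum_univ_two, sq_abs]

lemma vnorm_nonneg (v : Fin 2 → ℝ) : 0 ≤ vnorm v := Real.sqrt_nonneg _

lemma vnorm_sub_le (v w : Fin 2 → ℝ) : vnorm (v - w) ≤ vnorm v + vnorm w := by
  simp only [vnorm_eq]
  have : (WithLp.equiv 2 (Fin 2 → ℝ)).symm (v - w)
      = (WithLp.equiv 2 (Fin 2 → ℝ)).symm v - (WithLp.equiv 2 (Fin 2 → ℝ)).symm w := rfl
  rw [this]
  exact norm_sub_le _ _

lemma vnorm_smul (c : ℝ) (v : Fin 2 → ℝ) : vnorm (c • v) = |c| * vnorm v := by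
  simp only [vnorm_eq]
  have : (WithLp.equiv 2 (Fin 2 → ℝ)).symm (c • v)
      = c • (WithLp.equiv 2 (Fin 2 → ℝ)).symm v := rfl
  rw [this, norm_smul, Real.norm_eq_abs]

lemma cayley (M : Matrix (Fin 2) (Fin 2) ℝ) (hM : M.det = 1) (Φ₀ : Fin 2 → ℝ) :
    (M * M).mulVec Φ₀ = (Matrix.trace M) • M.mulVec Φ₀ - Φ₀ := by
  rw [Matrix.det_fin_two] at hM
  funext i
  fin_cases i <;>
    simp [Matrix.mulVec, Matrix.mul_apply, dotProduct, Fin.sum_univ_two,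
      Matrix.trace_fin_two]
  · linear_combination (-Φ₀ 0) * hM
  · linear_combination (-Φ₀ 1) * hM

/-- For `M ∈ SL(2,ℝ)` and a unit vector `Φ₀`:
`max(‖MΦ₀‖, ‖M²Φ₀‖) ≥ (1/2)·min(1, 1/|tr M|)`, interpreted as `1/2` if `tr M = 0`. -/
theorem gordon_vector_bound (M : Matrix (Fin 2) (Fin 2) ℝ) (hM : M.det = 1)
    (Φ₀ : Fin 2 → ℝ) (hΦ₀ : vnorm Φ₀ = 1) :
    (Matrix.trace M = 0 →
      max (vnorm (M.mulVec Φ₀)) (vnorm ((M * M).mulVec Φ₀)) ≥ 1 / 2) ∧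
    (Matrix.trace M ≠ 0 →
      max (vnorm (M.mulVec Φ₀)) (vnorm ((M * M).mulVec Φ₀)) ≥
        (1 / 2) * min 1 (1 / |Matrix.trace M|)) := by
  set t := Matrix.trace M with ht
  set a := vnorm (M.mulVec Φ₀) with ha
  set b := vnorm ((M * M).mulVec Φ₀) with hb
  have key : (1 : ℝ) ≤ |t| * a + b := by
    have h1 : Φ₀ = t • M.mulVec Φ₀ - (M * M).mulVec Φ₀ := by
      rw [cayley M hM Φ₀]; abel
    calc (1 : ℝ) = vnorm Φ₀ := hΦ₀.symm
      _ = vnorm (t • M.mulVec Φ₀ - (M * M).mulVec Φ₀) := by rw [← h1]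
      _ ≤ vnorm (t • M.mulVec Φ₀) + vnorm ((M * M).mulVec Φ₀) := vnorm_sub_le _ _
      _ = |t| * a + b := by rw [vnorm_smul]
  have hma : a ≤ max a b := le_max_left _ _
  have hmb : b ≤ max a b := le_max_right _ _
  have ham : 0 ≤ a := vnorm_nonneg _
  constructor
  · intro h0
    rw [h0] at key
    simp at key
    linarith
  · intro h0
    have habs : 0 < |t| := abs_pos.mpr h0
    have hmax : 1 ≤ (|t| + 1) * max a b := by
      calc (1:ℝ) ≤ |t| * a + b := key
        _ ≤ |t| * max a b + max a b := by nlinarith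
        _ = (|t| + 1) * max a b := by ring
    rcases le_total (|t|) 1 with h1 | h1
    · rw [min_eq_left]
      · nlinarith
      · rw [le_div_iff₀ habs]; linarith
    · rw [min_eq_right]
      · have hm0 : 0 ≤ max a b := le_trans ham hma
        rw [ge_iff_le, show (1:ℝ)/2*(1/|t|) = 1/(2*|t|) by ring,
          div_le_iff₀ (by positivity)]
        nlinarith
      · rw [div_le_one habs]; exact h1
end

section
/- (Three-block Gordon lemma) Let V : ℤ → ℝ. Suppose there is a sequence n_k → ∞ such that for every k, V(j − n_k) = V(j) = V(j + n_k) for all 1 ≤ j ≤ n_k. Then for every energy E ∈ ℝ and every solution φ of φ(n+1) + φ(n−1) + V(n)φ(n) = Eφ(n) with ‖(φ(1), φ(0))‖ = 1, one has max(‖Φ(−n_k)‖, ‖Φ(n_k)‖, ‖Φ(2n_k)‖) ≥ 1/2 for every k, where Φ(n) = (φ(n+1), φ(n)). In particular, E is not an eigenvalue of the associated Schrödinger operator. -/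
/-!
Let `M` be the transfer matrix across a block of length `N` on which the potential repeats to
the left and to the right. Then `M` carries `Φ(-N) ↦ Φ(0) ↦ Φ(N) ↦ Φ(2N)`, and since `det M = 1`,
Cayley–Hamilton gives `M² = (tr M) M - 1`, hence `Φ(-N) + Φ(N) = t Φ(0)` and
`Φ(0) + Φ(2N) = t Φ(N)` with `t = tr M`. If `Φ(-N)`, `Φ(N)`, `Φ(2N)` all had norm below
`‖Φ(0)‖ / 2`, the first identity would force `|t| < 1`, and then the second would give
`‖Φ(0)‖ < ‖Φ(0)‖`. For an `ℓ²` solution the three norms tend to `0` along `n_k`, so `Φ(0) = 0`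
and the solution vanishes.
-/

open Filter Matrix Topology

theorem Matrix.mul_self_eq_trace_smul_sub_one {R : Type*} [CommRing R] [Nontrivial R]
    (M : Matrix (Fin 2) (Fin 2) R) (hM : M.det = 1) : M * M = M.trace • M - 1 := by
  have h := M.aeval_self_charpoly
  rw [charpoly_fin_two, hM] at h
  simp only [map_add, map_sub, map_pow, Polynomial.aeval_X, Polynomial.aeval_C, map_one,
    map_mul, Algebra.algebraMap_eq_smul_one, smul_one_mul] at h
  rw [← sq, eq_sub_iff_add_eq, ← sub_eq_zero, ← h]
  abel

theorem Matrix.add_mulVec_mulVec_eq_trace_smul {R : Type*} [CommRing R] [Nontrivial R]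
    (M : Matrix (Fin 2) (Fin 2) R) (hM : M.det = 1) (u : Fin 2 → R) :
    u + M *ᵥ (M *ᵥ u) = M.trace • (M *ᵥ u) := by
  rw [mulVec_mulVec, M.mul_self_eq_trace_smul_sub_one hM, sub_mulVec, smul_mulVec,
    one_mulVec]
  abel

theorem norm_le_two_mul_max_of_add_eq_smul {E : Type*} [SeminormedAddCommGroup E]
    [NormedSpace ℝ E] {x y z w : E} {t : ℝ} (hxz : x + z = t • y) (hyw : y + w = t • z) :
    ‖y‖ ≤ 2 * max ‖x‖ (max ‖z‖ ‖w‖) := by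
  set m := max ‖x‖ (max ‖z‖ ‖w‖)
  have hx : ‖x‖ ≤ m := le_max_left _ _
  have hz : ‖z‖ ≤ m := (le_max_left _ _).trans (le_max_right _ _)
  have hw : ‖w‖ ≤ m := (le_max_right _ _).trans (le_max_right _ _)
  have ht : |t| * ‖y‖ ≤ 2 * m := calc
    |t| * ‖y‖ = ‖x + z‖ := by rw [hxz, norm_smul, Real.norm_eq_abs]
    _ ≤ ‖x‖ + ‖z‖ := norm_add_le _ _
    _ ≤ 2 * m := by linarith
  have hy : ‖y‖ ≤ |t| * m + m := calc
    ‖y‖ = ‖t • z - w‖ := by rw [← hyw, add_sub_cancel_right]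
    _ ≤ ‖t • z‖ + ‖w‖ := norm_sub_le _ _
    _ = |t| * ‖z‖ + ‖w‖ := by rw [norm_smul, Real.norm_eq_abs]
    _ ≤ |t| * m + m := by gcongr
  by_contra! hlt
  have hm : 0 ≤ m := (norm_nonneg x).trans hx
  nlinarith [abs_nonneg t]

theorem vnorm_eq_norm_toLp (v : Fin 2 → ℝ) :
    vnorm v = ‖(WithLp.toLp 2 v : EuclideanSpace ℝ (Fin 2))‖ := by
  simp [vnorm, EuclideanSpace.norm_eq, Fin.sum_univ_two]

namespace Schrodinger

variable (V : ℤ → ℝ) (E : ℝ)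

def IsSolution (φ : ℤ → ℝ) : Prop := ∀ m : ℤ, φ (m + 1) + φ (m - 1) + V m * φ m = E * φ m

def transferMatrix (m : ℤ) : Matrix (Fin 2) (Fin 2) ℝ := !![E - V m, -1; 1, 0]

def monodromy (b : ℤ) : ℕ → Matrix (Fin 2) (Fin 2) ℝ
  | 0 => 1
  | j + 1 => transferMatrix V E (b + j + 1) * monodromy b j

/-- The paper's `Φ(m) = (φ(m+1), φ(m))`. -/
def solVec (φ : ℤ → ℝ) (m : ℤ) : Fin 2 → ℝ := ![φ (m + 1), φ m]

theorem det_transferMatrix (m : ℤ) : (transferMatrix V E m).det = 1 := by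
  simp [transferMatrix, det_fin_two_of]

theorem det_monodromy (b : ℤ) : ∀ N, (monodromy V E b N).det = 1
  | 0 => det_one
  | N + 1 => by rw [monodromy, det_mul, det_transferMatrix, det_monodromy b N, mul_one]

theorem monodromy_congr {b b' : ℤ} {N : ℕ}
    (h : ∀ j : ℕ, j < N → V (b + j + 1) = V (b' + j + 1)) :
    monodromy V E b N = monodromy V E b' N := by
  induction N with
  | zero => rfl
  | succ N ih =>
    simp only [monodromy, transferMatrix, h N N.lt_succ_self,
      ih fun j hj => h j (hj.trans N.lt_succ_self)]

variable {V E} {φ : ℤ → ℝ}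

theorem solVec_add_one (hφ : IsSolution V E φ) (m : ℤ) :
    solVec φ (m + 1) = transferMatrix V E (m + 1) *ᵥ solVec φ m := by
  have h := hφ (m + 1)
  rw [add_sub_cancel_right] at h
  ext i
  fin_cases i
  · simp [solVec, transferMatrix]; linarith
  · simp [solVec, transferMatrix]

theorem solVec_add_nat (hφ : IsSolution V E φ) (b : ℤ) :
    ∀ N : ℕ, solVec φ (b + N) = monodromy V E b N *ᵥ solVec φ b
  | 0 => by simp [monodromy]
  | N + 1 => by
    rw [Nat.cast_succ, ← add_assoc, solVec_add_one hφ, solVec_add_nat hφ b N, monodromy,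
      mulVec_mulVec]

theorem solVec_eq_zero_iff {m : ℤ} :
    solVec φ m = 0 ↔ φ (m + 1) = 0 ∧ φ m = 0 := by
  refine ⟨fun h => ⟨congrFun h 0, congrFun h 1⟩, fun ⟨h1, h0⟩ => ?_⟩
  ext i
  fin_cases i <;> simp [solVec, h0, h1]

theorem solVec_add_one_eq_zero_iff (hφ : IsSolution V E φ) {m : ℤ} :
    solVec φ (m + 1) = 0 ↔ solVec φ m = 0 := by
  have h := hφ (m + 1)
  rw [add_sub_cancel_right] at h
  simp only [solVec_eq_zero_iff]
  constructor
  · rintro ⟨h2, h1⟩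
    refine ⟨h1, ?_⟩
    simpa [h1, h2] using h
  · rintro ⟨h1, h0⟩
    refine ⟨?_, h1⟩
    simpa [h1, h0] using h

theorem eq_zero_of_solVec_zero (hφ : IsSolution V E φ) (h0 : solVec φ 0 = 0) :
    φ = 0 := by
  have key : ∀ m : ℤ, solVec φ m = 0 := by
    intro m
    induction m using Int.induction_on with
    | zero => exact h0
    | succ i ih => rw [solVec_add_one hφ, ih, mulVec_zero]
    | pred i ih => rwa [← solVec_add_one_eq_zero_iff hφ, sub_add_cancel]
  funext m
  exact (solVec_eq_zero_iff.mp (key m)).2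

theorem solVec_neg_add_solVec_eq_trace_smul (hφ : IsSolution V E φ) {N : ℕ}
    (hrep : ∀ j : ℤ, 1 ≤ j → j ≤ N → V (j - N) = V j ∧ V j = V (j + N)) :
    solVec φ (-N) + solVec φ N = (monodromy V E 0 N).trace • solVec φ 0 ∧
      solVec φ 0 + solVec φ (2 * N) = (monodromy V E 0 N).trace • solVec φ N := by
  have hblock : ∀ j : ℕ, j < N →
      V (-N + j + 1) = V (0 + j + 1) ∧ V (N + j + 1) = V (0 + j + 1) := by
    intro j hj
    obtain ⟨hl, hr⟩ := hrep (j + 1) (by omega) (by omega)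
    constructor
    · convert hl using 2 <;> ring
    · convert hr.symm using 2 <;> ring
  have hmid : solVec φ N = monodromy V E 0 N *ᵥ solVec φ 0 := by
    simpa using solVec_add_nat hφ 0 N
  have hleft : solVec φ 0 = monodromy V E 0 N *ᵥ solVec φ (-N) := by
    rw [← monodromy_congr V E fun j hj => (hblock j hj).1]
    simpa using solVec_add_nat hφ (-N) N
  have hright : solVec φ (2 * N) = monodromy V E 0 N *ᵥ solVec φ N := by
    rw [← monodromy_congr V E fun j hj => (hblock j hj).2, two_mul]
    exact solVec_add_nat hφ N N
  constructor
  · rw [hmid, hleft]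
    exact Matrix.add_mulVec_mulVec_eq_trace_smul _ (det_monodromy V E 0 N) _
  · rw [hright, hmid]
    exact Matrix.add_mulVec_mulVec_eq_trace_smul _ (det_monodromy V E 0 N) _

theorem vnorm_solVec_zero_le (hφ : IsSolution V E φ) {N : ℕ}
    (hrep : ∀ j : ℤ, 1 ≤ j → j ≤ N → V (j - N) = V j ∧ V j = V (j + N)) :
    vnorm (solVec φ 0) ≤ 2 * max (vnorm (solVec φ (-N)))
      (max (vnorm (solVec φ N)) (vnorm (solVec φ (2 * N)))) := by
  obtain ⟨hleft, hright⟩ := solVec_neg_add_solVec_eq_trace_smul hφ hrep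
  simp only [vnorm_eq_norm_toLp]
  exact norm_le_two_mul_max_of_add_eq_smul (congrArg (WithLp.toLp 2) hleft)
    (congrArg (WithLp.toLp 2) hright)

theorem tendsto_vnorm_solVec_cofinite (hφ : Summable fun m => φ m ^ 2) :
    Tendsto (fun m => vnorm (solVec φ m)) cofinite (𝓝 0) := by
  have h0 := hφ.tendsto_cofinite_zero
  have h1 := h0.comp (add_left_injective (1 : ℤ)).tendsto_cofinite
  simpa [vnorm, solVec] using (h1.add h0).sqrt

end Schrodinger

open Schrodinger in
/-- Three-block Gordon lemma: if the potential `V` obeys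
`V(j − n_k) = V(j) = V(j + n_k)` for `1 ≤ j ≤ n_k` along a sequence `n_k → ∞`, then for
every energy `E` and every solution `φ` of the difference equation with
`‖(φ(1),φ(0))‖ = 1` one has `max(‖Φ(−n_k)‖, ‖Φ(n_k)‖, ‖Φ(2n_k)‖) ≥ 1/2`; in particular
`E` is not an eigenvalue (there is no nonzero ℓ² solution). -/
theorem three_block_gordon (V : ℤ → ℝ) (n : ℕ → ℕ)
    (hn : Filter.Tendsto n Filter.atTop Filter.atTop)
    (hrep : ∀ k, ∀ j : ℤ, 1 ≤ j → j ≤ (n k : ℤ) →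
      V (j - (n k : ℤ)) = V j ∧ V j = V (j + (n k : ℤ))) :
    ∀ E : ℝ,
    (∀ φ : ℤ → ℝ,
      (∀ m : ℤ, φ (m + 1) + φ (m - 1) + V m * φ m = E * φ m) →
      vnorm ![φ 1, φ 0] = 1 →
      ∀ k, max (vnorm ![φ (-(n k : ℤ) + 1), φ (-(n k : ℤ))])
            (max (vnorm ![φ ((n k : ℤ) + 1), φ (n k : ℤ)])
              (vnorm ![φ (2 * (n k : ℤ) + 1), φ (2 * (n k : ℤ))])) ≥ 1 / 2) ∧
    (∀ φ : ℤ → ℝ,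
      (∀ m : ℤ, φ (m + 1) + φ (m - 1) + V m * φ m = E * φ m) →
      Summable (fun m : ℤ => (φ m) ^ 2) → φ = 0) := by
  intro E
  refine ⟨fun φ hφ hnorm k => ?_, fun φ hφ hsum => ?_⟩
  · have h := vnorm_solVec_zero_le hφ (hrep k)
    rw [show vnorm (solVec φ 0) = 1 from hnorm] at h
    change 1 / 2 ≤ max (vnorm (solVec φ _)) (max (vnorm (solVec φ _)) (vnorm (solVec φ _)))
    linarith
  · have hint : Tendsto (fun k => (n k : ℤ)) atTop atTop := tendsto_natCast_atTop_atTop.comp hn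
    have hdouble : Tendsto (fun k => 2 * (n k : ℤ)) atTop atTop :=
      tendsto_atTop_mono (fun k => by omega) hint
    have hdecay := tendsto_vnorm_solVec_cofinite hsum
    have hneg := (tendsto_neg_atTop_atBot.comp hint).mono_right atBot_le_cofinite
    have hlim := (hdecay.comp hneg).max ((hdecay.comp (hint.mono_right atTop_le_cofinite)).max
      (hdecay.comp (hdouble.mono_right atTop_le_cofinite)))
    have hle : vnorm (solVec φ 0) ≤ 0 := by
      simpa using ge_of_tendsto' (hlim.const_mul 2) fun k => vnorm_solVec_zero_le hφ (hrep k)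
    apply eq_zero_of_solVec_zero hφ
    rw [vnorm_eq_norm_toLp, norm_le_zero_iff] at hle
    exact congrArg WithLp.ofLp hle
end

section
/- Let s_n be the words over {0,1} defined by s₋₁ = 1, s₀ = 0, s₁ = s₀^{a₁−1} s₋₁, and s_n = s_{n−1}^{a_n} s_{n−2} for n ≥ 2, where (a_n) are positive integers. Then for each n ≥ 2, s_n s_{n+1} = s_{n+1} s_{n−1}^{a_n − 1} s_{n−2} s_{n−1}. -/
/-- `k`-fold concatenation of a word with itself. -/
def wpow {A : Type*} (w : List A) (k : ℕ) : List A := (List.replicate k w).flatten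

lemma wpow_succ {A : Type*} (w : List A) (k : ℕ) :
    wpow w (k + 1) = w ++ wpow w k := by
  simp [wpow, List.replicate_succ]

lemma wpow_comm {A : Type*} (w : List A) (k : ℕ) :
    w ++ wpow w k = wpow w k ++ w := by
  induction k with
  | zero => simp [wpow]
  | succ k ih => rw [wpow_succ, ih, ← List.append_assoc, ← ih, List.append_assoc]

/-- Combinatorial identity for the Sturmian standard words
`s₋₁ = 1, s₀ = 0, s₁ = s₀^{a₁−1}s₋₁, s_n = s_{n−1}^{a_n}s_{n−2}` (n ≥ 2):
for all `n ≥ 2`, `s_n s_{n+1} = s_{n+1} s_{n−1}^{a_n−1} s_{n−2} s_{n−1}`. -/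
theorem sturmian_word_identity (a : ℤ → ℕ) (ha : ∀ n, 1 ≤ a n)
    (s : ℤ → List (Fin 2))
    (hm1 : s (-1) = [1]) (h0 : s 0 = [0])
    (h1 : s 1 = wpow (s 0) (a 1 - 1) ++ s (-1))
    (hrec : ∀ n : ℤ, 2 ≤ n → s n = wpow (s (n - 1)) (a n) ++ s (n - 2)) :
    ∀ n : ℤ, 2 ≤ n →
      s n ++ s (n + 1) =
        s (n + 1) ++ wpow (s (n - 1)) (a n - 1) ++ s (n - 2) ++ s (n - 1) := by
  intro n hn
  have hS : s (n + 1) = wpow (s n) (a (n + 1)) ++ s (n - 1) := by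
    have := hrec (n + 1) (by omega)
    simpa [show n + 1 - 1 = n by ring, show n + 1 - 2 = n - 1 by ring] using this
  have hn' : s n = wpow (s (n - 1)) (a n) ++ s (n - 2) := hrec n hn
  have hpow : s (n - 1) ++ wpow (s (n - 1)) (a n - 1) = wpow (s (n - 1)) (a n) := by
    rw [← wpow_succ, Nat.sub_add_cancel (ha n)]
  calc s n ++ s (n + 1)
      = s n ++ wpow (s n) (a (n + 1)) ++ s (n - 1) := by rw [hS, List.append_assoc]
    _ = wpow (s n) (a (n + 1)) ++ s n ++ s (n - 1) := by rw [wpow_comm]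
    _ = wpow (s n) (a (n + 1)) ++ (wpow (s (n - 1)) (a n) ++ s (n - 2)) ++ s (n - 1) := by
        rw [← hn']
    _ = wpow (s n) (a (n + 1)) ++ (s (n - 1) ++ wpow (s (n - 1)) (a n - 1) ++ s (n - 2)) ++
        s (n - 1) := by rw [hpow]
    _ = s (n + 1) ++ wpow (s (n - 1)) (a n - 1) ++ s (n - 2) ++ s (n - 1) := by
        rw [hS]; simp [List.append_assoc]
end

section
/- Every one-sided infinite sequence s over a finite alphabet which is not ultimately periodic satisfies p_s(n) ≥ n + 1 for every n ∈ ℕ. -/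
/-- The complexity function `p_s(n)`: the number of distinct factors of length `n`
of the one-sided infinite word `s`. -/
noncomputable def complexity {A : Type*} (s : ℕ → A) (n : ℕ) : ℕ :=
  Set.ncard {w : Fin n → A | ∃ k : ℕ, ∀ i : Fin n, w i = s (k + i)}

/-- `s` is ultimately periodic: there are `N` and `p ≥ 1` with `s(k+p) = s(k)`
for all `k ≥ N`. -/
def UltimatelyPeriodic {A : Type*} (s : ℕ → A) : Prop :=
  ∃ N p : ℕ, 1 ≤ p ∧ ∀ k, N ≤ k → s (k + p) = s k

/-- The window of length `n` starting at `k`. -/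
private def Fset {A : Type*} (s : ℕ → A) (m : ℕ) : Set (Fin m → A) :=
  {w : Fin m → A | ∃ k : ℕ, ∀ i : Fin m, w i = s (k + i)}

private def win {A : Type*} (s : ℕ → A) (n k : ℕ) : Fin n → A := fun i => s (k + i)

/-- Key lemma: if the complexity doesn't strictly increase from `n` to `n+1`,
then `s` is ultimately periodic. -/
private lemma key {A : Type*} [Fintype A] (s : ℕ → A) (n : ℕ)
    (h : complexity s (n + 1) ≤ complexity s n) : UltimatelyPeriodic s := by
  have hcomp : ∀ m, complexity s m = (Fset s m).ncard := fun m => rfl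
  rw [hcomp, hcomp] at h
  classical
  have hwin : ∀ m k, win s m k ∈ Fset s m := fun m k => ⟨k, fun i => rfl⟩
  -- restriction map
  have hres : ∀ w ∈ Fset s (n + 1), (fun i : Fin n => w i.castSucc) ∈ Fset s n := by
    rintro w ⟨k, hk⟩
    exact ⟨k, fun i => by simpa using hk i.castSucc⟩
  have hsurj : ∀ v ∈ Fset s n, ∃ w, ∃ _ : w ∈ Fset s (n + 1), (fun i : Fin n => w i.castSucc) = v := by
    rintro v ⟨k, hk⟩
    refine ⟨win s (n + 1) k, hwin _ k, funext fun i => ?_⟩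
    rw [hk i]; simp [win]
  have hinj : ∀ w ∈ Fset s (n + 1), ∀ w' ∈ Fset s (n + 1),
      (fun i : Fin n => w i.castSucc) = (fun i : Fin n => w' i.castSucc) → w = w' :=
    fun w hw w' hw' he => Set.inj_on_of_surj_on_of_ncard_le
      (fun w _ => fun i : Fin n => w i.castSucc) hres hsurj h hw hw' he (Set.toFinite _)
  -- determinism
  have hdet : ∀ k k', win s n k = win s n k' → s (k + n) = s (k' + n) := by
    intro k k' hkk
    have : win s (n + 1) k = win s (n + 1) k' := by
      refine hinj _ (hwin _ k) _ (hwin _ k') (funext fun i => ?_)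
      have := congrFun hkk i
      simpa [win] using this
    have := congrFun this (Fin.last n)
    simpa [win, Fin.last] using this
  -- pigeonhole
  obtain ⟨a, b, hab, heq⟩ := Finite.exists_ne_map_eq_of_infinite (win s n)
  wlog hlt : a < b generalizing a b
  · exact this b a (Ne.symm hab) heq.symm (by omega)
  refine ⟨a, b - a, by omega, ?_⟩
  have main : ∀ t, s (b + t) = s (a + t) := by
    intro t
    induction t using Nat.strong_induction_on with
    | _ t ih =>
      rcases lt_or_ge t n with htn | htn
      · have := congrFun heq ⟨t, htn⟩
        simpa [win] using this.symm
      · have hw : win s n (a + (t - n)) = win s n (b + (t - n)) := by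
          funext i
          have : (a + (t - n) + i : ℕ) = a + (t - n + i) := by omega
          simp only [win, this]
          have : (b + (t - n) + i : ℕ) = b + (t - n + i) := by omega
          rw [this, ih (t - n + i) (by omega)]
        have := hdet _ _ hw
        have e1 : a + (t - n) + n = a + t := by omega
        have e2 : b + (t - n) + n = b + t := by omega
        rw [e1, e2] at this
        exact this.symm
  intro k hk
  have e : k + (b - a) = b + (k - a) := by omega
  have e2 : a + (k - a) = k := by omega
  rw [e, main (k - a), e2]

/-- Every one-sided infinite word over a finite alphabet which is not ultimately
periodic satisfies `p_s(n) ≥ n + 1` for every `n`. -/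
theorem complexity_of_not_ultimately_periodic {A : Type*} [Fintype A] (s : ℕ → A)
    (h : ¬ UltimatelyPeriodic s) : ∀ n : ℕ, n + 1 ≤ complexity s n := by
  intro n
  induction n with
  | zero =>
    have huniv : {w : Fin 0 → A | ∃ k : ℕ, ∀ i : Fin 0, w i = s (k + i)} = Set.univ := by
      ext w; simp only [Set.mem_setOf_eq, Set.mem_univ, iff_true]
      exact ⟨0, fun i => i.elim0⟩
    have : complexity s 0 = 1 := by
      rw [complexity, huniv, Set.ncard_univ]
      simp [Nat.card_eq_fintype_card]
    omega
  | succ n ih =>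
    by_contra hc
    push_neg at hc
    exact h (key s n (by omega))
end

section
/- For the Fibonacci substitution S(a) = ab, S(b) = a, the trace quantities x_n(E) = tr(M_E(Sⁿ(a))), y_n(E) = tr(M_E(Sⁿ(b))), z_n(E) = tr(M_E(Sⁿ(a))·M_E(Sⁿ(b))) satisfy the recursions x_n = z_{n−1}, y_n = x_{n−1}, and z_n = x_{n−1}·z_{n−1} − y_{n−1}; equivalently x_n = x_{n−1}x_{n−2} − x_{n−3} for n ≥ 3. -/
/-- The Fibonacci substitution on the two-letter alphabet `{a, b}` (encoded as
`Bool` with `a = true`, `b = false`): `S(a) = ab`, `S(b) = a`. -/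
def fibS : Bool → List Bool
  | true => [true, false]
  | false => [true]

/-- Morphic extension of a substitution to words. -/
def substWord {A : Type*} (S : A → List A) (w : List A) : List A :=
  (w.map S).flatten

/-- Iterates `S^n(c)`. -/
def substIter {A : Type*} (S : A → List A) : ℕ → A → List A
  | 0, c => [c]
  | n + 1, c => substWord S (substIter S n c)

/-- Transfer matrix of a single letter: `M_E(c) = [[E − f(c), −1],[1, 0]]`. -/
noncomputable def Mletter (f : Bool → ℝ) (E : ℝ) (c : Bool) : Matrix (Fin 2) (Fin 2) ℝ :=
  !![E - f c, -1; 1, 0]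

/-- Transfer matrix of a word: `M_E(c₁…c_n) = M_E(c_n)···M_E(c₁)`. -/
noncomputable def Mword (f : Bool → ℝ) (E : ℝ) : List Bool → Matrix (Fin 2) (Fin 2) ℝ
  | [] => 1
  | c :: r => Mword f E r * Mletter f E c

/-- `x_n(E) = tr M_E(Sⁿ(a))`. -/
noncomputable def xtr (f : Bool → ℝ) (E : ℝ) (n : ℕ) : ℝ :=
  Matrix.trace (Mword f E (substIter fibS n true))

/-- `y_n(E) = tr M_E(Sⁿ(b))`. -/
noncomputable def ytr (f : Bool → ℝ) (E : ℝ) (n : ℕ) : ℝ :=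
  Matrix.trace (Mword f E (substIter fibS n false))

/-- `z_n(E) = tr (M_E(Sⁿ(a))·M_E(Sⁿ(b)))`. -/
noncomputable def ztr (f : Bool → ℝ) (E : ℝ) (n : ℕ) : ℝ :=
  Matrix.trace (Mword f E (substIter fibS n true) * Mword f E (substIter fibS n false))

lemma Mword_append (f : Bool → ℝ) (E : ℝ) (u v : List Bool) :
    Mword f E (u ++ v) = Mword f E v * Mword f E u := by
  induction u with
  | nil => simp [Mword]
  | cons c r ih => simp [Mword, ih, mul_assoc]

lemma det_Mword (f : Bool → ℝ) (E : ℝ) (w : List Bool) : (Mword f E w).det = 1 := by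
  induction w with
  | nil => simp [Mword]
  | cons c r ih =>
    simp [Mword, Matrix.det_mul, ih, Mletter, Matrix.det_fin_two_of]

lemma substWord_append (S : Bool → List Bool) (u v : List Bool) :
    substWord S (u ++ v) = substWord S u ++ substWord S v := by
  simp [substWord]

lemma substIter_succ (n : ℕ) :
    substIter fibS (n + 1) true = substIter fibS n true ++ substIter fibS n false ∧
    substIter fibS (n + 1) false = substIter fibS n true := by
  induction n with
  | zero => simp [substIter, substWord, fibS]
  | succ n ih =>
    constructor
    · show substWord fibS (substIter fibS (n + 1) true) = _
      conv_lhs => rw [ih.1]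
      rw [substWord_append]
      rfl
    · show substWord fibS (substIter fibS (n + 1) false) = _
      rw [ih.2]; rfl

lemma trace_id (A B : Matrix (Fin 2) (Fin 2) ℝ) :
    (B * A * A).trace = A.trace * (B * A).trace - A.det * B.trace := by
  simp [Matrix.trace, Matrix.mul_apply, Fin.sum_univ_two, Matrix.det_fin_two,
    Matrix.diag]
  ring

lemma step (f : Bool → ℝ) (E : ℝ) (n : ℕ) :
    xtr f E (n + 1) = ztr f E n ∧
    ytr f E (n + 1) = xtr f E n ∧
    ztr f E (n + 1) = xtr f E n * ztr f E n - ytr f E n := by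
  obtain ⟨ha, hb⟩ := substIter_succ n
  set A := Mword f E (substIter fibS n true)
  set B := Mword f E (substIter fibS n false)
  have hMa : Mword f E (substIter fibS (n + 1) true) = B * A := by
    rw [ha, Mword_append]
  have hMb : Mword f E (substIter fibS (n + 1) false) = A := by rw [hb]
  refine ⟨?_, ?_, ?_⟩
  · rw [xtr, hMa, Matrix.trace_mul_comm]; rfl
  · rw [ytr, hMb]; rfl
  · rw [ztr, hMa, hMb, trace_id, det_Mword, Matrix.trace_mul_comm]
    simp [xtr, ytr, ztr, A, B]

/-- The Fibonacci trace map: `x_n = z_{n−1}`, `y_n = x_{n−1}`,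
`z_n = x_{n−1}z_{n−1} − y_{n−1}`; equivalently
`x_n = x_{n−1}x_{n−2} − x_{n−3}` for `n ≥ 3`. -/
theorem fibonacci_trace_map (f : Bool → ℝ) (E : ℝ) :
    (∀ n : ℕ, 1 ≤ n →
      xtr f E n = ztr f E (n - 1) ∧
      ytr f E n = xtr f E (n - 1) ∧
      ztr f E n = xtr f E (n - 1) * ztr f E (n - 1) - ytr f E (n - 1)) ∧
    (∀ n : ℕ, 3 ≤ n →
      xtr f E n = xtr f E (n - 1) * xtr f E (n - 2) - xtr f E (n - 3)) := by
  have h1 : ∀ n : ℕ, 1 ≤ n →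
      xtr f E n = ztr f E (n - 1) ∧
      ytr f E n = xtr f E (n - 1) ∧
      ztr f E n = xtr f E (n - 1) * ztr f E (n - 1) - ytr f E (n - 1) := by
    intro n hn
    obtain ⟨m, rfl⟩ := Nat.exists_eq_add_of_le hn
    simpa [Nat.add_sub_cancel, Nat.add_comm] using step f E m
  refine ⟨h1, ?_⟩
  intro n hn
  obtain ⟨m, rfl⟩ := Nat.exists_eq_add_of_le hn
  have e1 : 3 + m - 1 = m + 2 := by omega
  have e2 : 3 + m - 2 = m + 1 := by omega
  have e3 : 3 + m - 3 = m := by omega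
  rw [e1, e2, e3]
  have s2 := step f E (m + 2)
  have s1 := step f E (m + 1)
  have s0 := step f E m
  have : (3 : ℕ) + m = m + 2 + 1 := by omega
  have h : xtr f E (m + 2) = ztr f E (m + 1) := by simpa using s1.1
  rw [this, s2.1, s1.2.2, s0.2.1, ← h]
  ring
end
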